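/- If A and B are reducibility candidates, then A ⊕ B (the closure of {α.t + β.r | t ∈ A, r ∈ B} under CR2 and CR3) is a reducibility candidate. -/

import Mathlib

open scoped NNReal

namespace LCA

/-! ## Types of λCA -/

mutual
inductive UTy : Type
  | var : ℕ → UTy
  | arrow : UTy → Ty → UTy
  | all : UTy → UTy
inductive Ty : Type
  | u : UTy → Ty
  | add : Ty → Ty → Ty
  | zero : Ty
end

mutual
def UTy.shift (d c : ℕ) : UTy → UTy
  | .var n => .var (if n < c then n else n + d)
  | .arrow U T => .arrow (U.shift d c) (T.shift d c)
  | .all U => .all (U.shift d (c+1))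
def Ty.shift (d c : ℕ) : Ty → Ty
  | .u U => .u (U.shift d c)
  | .add T R => .add (T.shift d c) (R.shift d c)
  | .zero => .zero
end

mutual
def UTy.subst (k : ℕ) (V : UTy) : UTy → UTy
  | .var n => if n = k then V else .var (if k < n then n - 1 else n)
  | .arrow U T => .arrow (UTy.subst k V U) (Ty.subst k V T)
  | .all U => .all (UTy.subst (k+1) (V.shift 1 0) U)
termination_by t => sizeOf t
def Ty.subst (k : ℕ) (V : UTy) : Ty → Ty
  | .u U => .u (UTy.subst k V U)
  | .add T R => .add (Ty.subst k V T) (Ty.subst k V R)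
  | .zero => .zero
termination_by t => sizeOf t
end

/- Type equivalence: least congruence with `T + 0̄ ≡ T`, commutativity and
associativity of `+`. -/
mutual
inductive UEq : UTy → UTy → Prop
  | refl : ∀ U, UEq U U
  | symm : ∀ {U V}, UEq U V → UEq V U
  | trans : ∀ {U V W}, UEq U V → UEq V W → UEq U W
  | arrow : ∀ {U V T S}, UEq U V → TyEq T S → UEq (.arrow U T) (.arrow V S)
  | all : ∀ {U V}, UEq U V → UEq (.all U) (.all V)
inductive TyEq : Ty → Ty → Prop
  | refl : ∀ T, TyEq T T
  | symm : ∀ {T R}, TyEq T R → TyEq R T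
  | trans : ∀ {T R S}, TyEq T R → TyEq R S → TyEq T S
  | u : ∀ {U V}, UEq U V → TyEq (.u U) (.u V)
  | addCong : ∀ {T T' R R'}, TyEq T T' → TyEq R R' → TyEq (.add T R) (.add T' R')
  | addZero : ∀ T, TyEq (.add T .zero) T
  | comm : ∀ T R, TyEq (.add T R) (.add R T)
  | assoc : ∀ T R S, TyEq (.add T (.add R S)) (.add (.add T R) S)
end

/-- `nTy n T` is the `n`-fold sum `T + ⋯ + T`, with `nTy 0 T = 0̄`. -/
def nTy : ℕ → Ty → Ty
  | 0, _ => .zero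
  | 1, T => T
  | n+2, T => .add T (nTy (n+1) T)

/-- The imprecision order `≼` on types (Table 4). -/
inductive Pce : Ty → Ty → Prop
  | wk : ∀ {m n : ℕ} (T : Ty), m ≤ n → Pce (nTy m T) (nTy n T)
  | ofEq : ∀ {T R}, TyEq T R → Pce T R
  | trans : ∀ {T S R}, Pce T S → Pce S R → Pce T R
  | addCong : ∀ {T₁ T₂ S₁ S₂}, Pce T₁ T₂ → Pce S₁ S₂ → Pce (.add T₁ S₁) (.add T₂ S₂)
  | arrow : ∀ {U₁ U₂ : UTy} {T₁ T₂ : Ty}, Pce (.u U₂) (.u U₁) → Pce T₁ T₂ →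
      Pce (.u (.arrow U₁ T₁)) (.u (.arrow U₂ T₂))
  | all : ∀ {U V : UTy}, Pce (.u U) (.u V) → Pce (.u (.all U)) (.u (.all V))

/-! ## Terms of λCA -/

inductive Tm : Type
  | var : ℕ → Tm
  | lam : UTy → Tm → Tm
  | tlam : Tm → Tm
  | app : Tm → Tm → Tm
  | tapp : Tm → UTy → Tm
  | zero : Tm
  | smul : ℝ≥0 → Tm → Tm
  | add : Tm → Tm → Tm

/-- Basis terms: variables, abstractions and type abstractions. -/
inductive IsBasis : Tm → Prop
  | var : ∀ n, IsBasis (.var n)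
  | lam : ∀ U t, IsBasis (.lam U t)
  | tlam : ∀ t, IsBasis (.tlam t)

def Tm.shift (d : ℕ) : ℕ → Tm → Tm
  | c, .var n => .var (if n < c then n else n + d)
  | c, .lam U t => .lam U (Tm.shift d (c+1) t)
  | c, .tlam t => .tlam (Tm.shift d c t)
  | c, .app t r => .app (Tm.shift d c t) (Tm.shift d c r)
  | c, .tapp t U => .tapp (Tm.shift d c t) U
  | _, .zero => .zero
  | c, .smul a t => .smul a (Tm.shift d c t)
  | c, .add t r => .add (Tm.shift d c t) (Tm.shift d c r)

def Tm.tshift (d : ℕ) : ℕ → Tm → Tm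
  | _, .var n => .var n
  | c, .lam U t => .lam (U.shift d c) (Tm.tshift d c t)
  | c, .tlam t => .tlam (Tm.tshift d (c+1) t)
  | c, .app t r => .app (Tm.tshift d c t) (Tm.tshift d c r)
  | c, .tapp t U => .tapp (Tm.tshift d c t) (U.shift d c)
  | _, .zero => .zero
  | c, .smul a t => .smul a (Tm.tshift d c t)
  | c, .add t r => .add (Tm.tshift d c t) (Tm.tshift d c r)

/-- Capture-avoiding substitution `t[s/x]` (de Bruijn). It acts linearly on
linear combinations. -/
def Tm.subst : ℕ → Tm → Tm → Tm
  | k, s, .var n => if n = k then s else .var (if k < n then n - 1 else n)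
  | k, s, .lam U t => .lam U (Tm.subst (k+1) (s.shift 1 0) t)
  | k, s, .tlam t => .tlam (Tm.subst k (s.tshift 1 0) t)
  | k, s, .app t r => .app (Tm.subst k s t) (Tm.subst k s r)
  | k, s, .tapp t U => .tapp (Tm.subst k s t) U
  | _, _, .zero => .zero
  | k, s, .smul a t => .smul a (Tm.subst k s t)
  | k, s, .add t r => .add (Tm.subst k s t) (Tm.subst k s r)

/-- Substitution `t[U/X]` of a unit type for a type variable in a term. -/
def Tm.tsubst : ℕ → UTy → Tm → Tm
  | _, _, .var n => .var n
  | k, V, .lam U t => .lam (UTy.subst k V U) (Tm.tsubst k V t)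
  | k, V, .tlam t => .tlam (Tm.tsubst (k+1) (V.shift 1 0) t)
  | k, V, .app t r => .app (Tm.tsubst k V t) (Tm.tsubst k V r)
  | k, V, .tapp t U => .tapp (Tm.tsubst k V t) (UTy.subst k V U)
  | _, _, .zero => .zero
  | k, V, .smul a t => .smul a (Tm.tsubst k V t)
  | k, V, .add t r => .add (Tm.tsubst k V t) (Tm.tsubst k V r)

/-! ## Typing -/

abbrev Ctx := List UTy

def sumTy : List Ty → Ty
  | [] => .zero
  | [T] => T
  | T :: Ts => .add T (sumTy Ts)

/-- Typing rules of λCA (Table 3). -/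
inductive HasTy : Ctx → Tm → Ty → Prop
  | var : ∀ {Γ : Ctx} {n U}, Γ[n]? = some U → HasTy Γ (.var n) (.u U)
  | zero : ∀ {Γ}, HasTy Γ .zero .zero
  | lam : ∀ {Γ U t T}, HasTy (U :: Γ) t T → HasTy Γ (.lam U t) (.u (.arrow U T))
  | app : ∀ {Γ t r U} {β : ℕ} {Ts : List Ty},
      HasTy Γ t (sumTy (Ts.map fun Ti => .u (.arrow U Ti))) →
      HasTy Γ r (nTy β (.u U)) →
      HasTy Γ (.app t r) (sumTy (Ts.map fun Ti => nTy β Ti))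
  | tlam : ∀ {Γ t U}, HasTy (Γ.map (UTy.shift 1 0)) t (.u U) →
      HasTy Γ (.tlam t) (.u (.all U))
  | tapp : ∀ {Γ t U V}, HasTy Γ t (.u (.all U)) →
      HasTy Γ (.tapp t V) (.u (UTy.subst 0 V U))
  | addI : ∀ {Γ t r T R}, HasTy Γ t T → HasTy Γ r R → HasTy Γ (.add t r) (.add T R)
  | smulI : ∀ {Γ t T} (a : ℝ≥0), HasTy Γ t T → HasTy Γ (.smul a t) (nTy ⌊a⌋₊ T)
  | eq : ∀ {Γ t T R}, HasTy Γ t T → TyEq T R → HasTy Γ t R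

/-! ## Reduction (Table 2), modulo AC of `+` -/

/-- AC-congruence on terms: commutativity and associativity of `+`. -/
inductive ACEq : Tm → Tm → Prop
  | refl : ∀ t, ACEq t t
  | symm : ∀ {t r}, ACEq t r → ACEq r t
  | trans : ∀ {t r s}, ACEq t r → ACEq r s → ACEq t s
  | comm : ∀ t r, ACEq (.add t r) (.add r t)
  | assoc : ∀ t r s, ACEq (.add t (.add r s)) (.add (.add t r) s)
  | addCong : ∀ {t t' r r'}, ACEq t t' → ACEq r r' → ACEq (.add t r) (.add t' r')
  | smulCong : ∀ {t t'} (a : ℝ≥0), ACEq t t' → ACEq (.smul a t) (.smul a t')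
  | appCong : ∀ {t t' r r'}, ACEq t t' → ACEq r r' → ACEq (.app t r) (.app t' r')
  | tappCong : ∀ {t t'} (U : UTy), ACEq t t' → ACEq (.tapp t U) (.tapp t' U)
  | lamCong : ∀ {t t'} (U : UTy), ACEq t t' → ACEq (.lam U t) (.lam U t')
  | tlamCong : ∀ {t t'}, ACEq t t' → ACEq (.tlam t) (.tlam t')

/-- One-step rewrite rules (Table 2), with contextual congruence. -/
inductive Step : Tm → Tm → Prop
  -- Group E
  | addZero : ∀ u, Step (.add u .zero) u
  | zeroSmul : ∀ u, Step (.smul 0 u) .zero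
  | oneSmul : ∀ u, Step (.smul 1 u) u
  | smulZero : ∀ a, Step (.smul a .zero) .zero
  | smulSmul : ∀ a b u, Step (.smul a (.smul b u)) (.smul (a*b) u)
  | smulAdd : ∀ a u v, Step (.smul a (.add u v)) (.add (.smul a u) (.smul a v))
  -- Group F
  | factor : ∀ a b u, Step (.add (.smul a u) (.smul b u)) (.smul (a+b) u)
  | factorOne : ∀ a u, Step (.add (.smul a u) u) (.smul (a+1) u)
  | factorBare : ∀ u, Step (.add u u) (.smul 2 u)
  -- Group A
  | appAddL : ∀ u v w, Step (.app (.add u v) w) (.add (.app u w) (.app v w))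
  | appAddR : ∀ u v w, Step (.app w (.add u v)) (.add (.app w u) (.app w v))
  | appSmulL : ∀ a u v, Step (.app (.smul a u) v) (.smul a (.app u v))
  | appSmulR : ∀ a u v, Step (.app v (.smul a u)) (.smul a (.app v u))
  | appZeroL : ∀ u, Step (.app .zero u) .zero
  | appZeroR : ∀ u, Step (.app u .zero) .zero
  -- β-reduction
  | beta : ∀ U t b, IsBasis b → Step (.app (.lam U t) b) (Tm.subst 0 b t)
  | tbeta : ∀ t U, Step (.tapp (.tlam t) U) (Tm.tsubst 0 U t)
  -- contextual congruence
  | addL : ∀ {t t'} (r), Step t t' → Step (.add t r) (.add t' r)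
  | smulC : ∀ {t t'} (a : ℝ≥0), Step t t' → Step (.smul a t) (.smul a t')
  | appL : ∀ {t t'} (r), Step t t' → Step (.app t r) (.app t' r)
  | appR : ∀ {r r'} (t), Step r r' → Step (.app t r) (.app t r')
  | tappC : ∀ {t t'} (U), Step t t' → Step (.tapp t U) (.tapp t' U)
  | lamC : ∀ {t t'} (U), Step t t' → Step (.lam U t) (.lam U t')
  | tlamC : ∀ {t t'}, Step t t' → Step (.tlam t) (.tlam t')

/-- One-step reduction, modulo AC of `+`. -/
def Red (t s : Tm) : Prop := ∃ t' s', ACEq t t' ∧ Step t' s' ∧ ACEq s' s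

def RedStar : Tm → Tm → Prop := Relation.ReflTransGen Red

/-- Strong normalisation: no infinite reduction sequence starts from `t`. -/
def SN (t : Tm) : Prop := Acc (fun a b => Red b a) t

/-! ## Values, neutral terms, reducibility candidates -/

def Tm.ClosedAt : ℕ → Tm → Prop
  | k, .var n => n < k
  | k, .lam _ t => Tm.ClosedAt (k+1) t
  | k, .tlam t => Tm.ClosedAt k t
  | k, .app t r => Tm.ClosedAt k t ∧ Tm.ClosedAt k r
  | k, .tapp t _ => Tm.ClosedAt k t
  | _, .zero => True
  | k, .smul _ t => Tm.ClosedAt k t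
  | k, .add t r => Tm.ClosedAt k t ∧ Tm.ClosedAt k r

def Tm.Closed (t : Tm) : Prop := Tm.ClosedAt 0 t

/-- The value grammar `v ::= λx:U.t | ΛX.t | v + v | α.v`. -/
inductive ValShape : Tm → Prop
  | lam : ∀ U t, ValShape (.lam U t)
  | tlam : ∀ t, ValShape (.tlam t)
  | add : ∀ {v w}, ValShape v → ValShape w → ValShape (.add v w)
  | smul : ∀ (a : ℝ≥0) {v}, ValShape v → ValShape (.smul a v)

def IsValue (t : Tm) : Prop := t.Closed ∧ ValShape t

/-- Neutral terms: closed terms that are not values. -/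
def Neutral (t : Tm) : Prop := t.Closed ∧ ¬ ValShape t

/-- Strongly normalising closed terms. -/
def SN0 : Set Tm := {t | t.Closed ∧ SN t}

/-- Reducibility candidates. -/
structure IsCand (A : Set Tm) : Prop where
  cr1 : A ⊆ SN0
  cr2 : ∀ ⦃t⦄, t ∈ A → ∀ ⦃t'⦄, RedStar t t' → t' ∈ A
  cr3 : ∀ ⦃t⦄, Neutral t → (∀ t', Red t t' → t' ∈ A) → t ∈ A

/-- Closure of `∅` under (CR3). -/
inductive EmptyClP : Tm → Prop
  | neu : ∀ {t}, Neutral t → (∀ t', Red t t' → EmptyClP t') → EmptyClP t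

def EmptyCl : Set Tm := {t | EmptyClP t}

/-- `A ⊕ B`: closure of `{α.t + β.r | t ∈ A, r ∈ B}` under (CR2) and (CR3). -/
inductive OplusClP (A B : Set Tm) : Tm → Prop
  | base : ∀ (a b : ℝ≥0) {t r}, t ∈ A → r ∈ B → OplusClP A B (.add (.smul a t) (.smul b r))
  | red : ∀ {t t'}, OplusClP A B t → RedStar t t' → OplusClP A B t'
  | neu : ∀ {t}, Neutral t → (∀ t', Red t t' → OplusClP A B t') → OplusClP A B t

def OplusCl (A B : Set Tm) : Set Tm := {t | OplusClP A B t}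

/-- `A → B`: closure under (CR3) of `{t | ∀ basis b ∈ A, t b ∈ B}`. -/
inductive ArrowClP (A B : Set Tm) : Tm → Prop
  | base : ∀ {t}, (∀ b, IsBasis b → b ∈ A → Tm.app t b ∈ B) → ArrowClP A B t
  | neu : ∀ {t}, Neutral t → (∀ t', Red t t' → ArrowClP A B t') → ArrowClP A B t

def ArrowCl (A B : Set Tm) : Set Tm := {t | ArrowClP A B t}

/-- `Λ A = {t | ∀ V, t@V ∈ A}`. -/
def LamSet (A : Set Tm) : Set Tm := {t | ∀ V : UTy, Tm.tapp t V ∈ A}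

def extRho (S : Set Tm) (ρ : ℕ → Set Tm) : ℕ → Set Tm
  | 0 => S
  | n+1 => ρ n

/- The reducibility model `⟦·⟧_ρ`. -/
mutual
def interpU (ρ : ℕ → Set Tm) : UTy → Set Tm
  | .var n => ρ n
  | .arrow U T => ArrowCl (interpU ρ U) (interpT ρ T)
  | .all U => ⋂ S ∈ {S : Set Tm | IsCand S}, LamSet (interpU (extRho S ρ) U)
termination_by t => sizeOf t
def interpT (ρ : ℕ → Set Tm) : Ty → Set Tm
  | .u U => interpU ρ U
  | .add T R => OplusCl (interpT ρ T) (interpT ρ R)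
  | .zero => EmptyCl
termination_by t => sizeOf t
end

/-! ## Parallel substitutions (for the adequacy statement) -/

def liftTySub (δ : ℕ → UTy) : ℕ → UTy
  | 0 => .var 0
  | n+1 => (δ n).shift 1 0

mutual
def UTy.substPar (δ : ℕ → UTy) : UTy → UTy
  | .var n => δ n
  | .arrow U T => .arrow (U.substPar δ) (T.substPar δ)
  | .all U => .all (U.substPar (liftTySub δ))
termination_by t => sizeOf t
def Ty.substPar (δ : ℕ → UTy) : Ty → Ty
  | .u U => .u (U.substPar δ)
  | .add T R => .add (T.substPar δ) (R.substPar δ)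
  | .zero => .zero
termination_by t => sizeOf t
end

def Tm.tsubstPar (δ : ℕ → UTy) : Tm → Tm
  | .var n => .var n
  | .lam U t => .lam (U.substPar δ) (Tm.tsubstPar δ t)
  | .tlam t => .tlam (Tm.tsubstPar (liftTySub δ) t)
  | .app t r => .app (Tm.tsubstPar δ t) (Tm.tsubstPar δ r)
  | .tapp t U => .tapp (Tm.tsubstPar δ t) (U.substPar δ)
  | .zero => .zero
  | .smul a t => .smul a (Tm.tsubstPar δ t)
  | .add t r => .add (Tm.tsubstPar δ t) (Tm.tsubstPar δ r)

def liftTmSub (σ : ℕ → Tm) : ℕ → Tm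
  | 0 => .var 0
  | n+1 => (σ n).shift 1 0

def Tm.substPar (σ : ℕ → Tm) : Tm → Tm
  | .var n => σ n
  | .lam U t => .lam U (Tm.substPar (liftTmSub σ) t)
  | .tlam t => .tlam (Tm.substPar (fun n => (σ n).tshift 1 0) t)
  | .app t r => .app (Tm.substPar σ t) (Tm.substPar σ r)
  | .tapp t U => .tapp (Tm.substPar σ t) U
  | .zero => .zero
  | .smul a t => .smul a (Tm.substPar σ t)
  | .add t r => .add (Tm.substPar σ t) (Tm.substPar σ r)

/-! ## The Additive calculus -/

inductive ATm : Type
  | var : ℕ → ATm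
  | lam : UTy → ATm → ATm
  | tlam : ATm → ATm
  | app : ATm → ATm → ATm
  | tapp : ATm → UTy → ATm
  | zero : ATm
  | add : ATm → ATm → ATm

/-- `nA n t` is the `n`-fold sum `t + ⋯ + t`, with `nA 0 t = 0`. -/
def nA : ℕ → ATm → ATm
  | 0, _ => .zero
  | 1, t => t
  | n+2, t => .add t (nA (n+1) t)

/-- The relation `⊑` on Additive terms. -/
inductive ASub : ATm → ATm → Prop
  | sum : ∀ {m n : ℕ} (t : ATm), m ≤ n → ASub (nA m t) (nA n t)
  | lam : ∀ {t t'} (U : UTy), ASub t t' → ASub (.lam U t) (.lam U t')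
  | tlam : ∀ {t t'}, ASub t t' → ASub (.tlam t) (.tlam t')
  | tapp : ∀ {t t'} (U : UTy), ASub t t' → ASub (.tapp t U) (.tapp t' U)
  | app : ∀ {t t' r r'}, ASub t t' → ASub r r' → ASub (.app t r) (.app t' r')
  | add : ∀ {t t' r r'}, ASub t t' → ASub r r' → ASub (.add t r) (.add t' r')
  | trans : ∀ {t r s}, ASub t r → ASub r s → ASub t s

/-- Typing rules of the Additive calculus: those of λCA without `sI`. -/
inductive AHasTy : Ctx → ATm → Ty → Prop
  | var : ∀ {Γ : Ctx} {n U}, Γ[n]? = some U → AHasTy Γ (.var n) (.u U)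
  | zero : ∀ {Γ}, AHasTy Γ .zero .zero
  | lam : ∀ {Γ U t T}, AHasTy (U :: Γ) t T → AHasTy Γ (.lam U t) (.u (.arrow U T))
  | app : ∀ {Γ t r U} {β : ℕ} {Ts : List Ty},
      AHasTy Γ t (sumTy (Ts.map fun Ti => .u (.arrow U Ti))) →
      AHasTy Γ r (nTy β (.u U)) →
      AHasTy Γ (.app t r) (sumTy (Ts.map fun Ti => nTy β Ti))
  | tlam : ∀ {Γ t U}, AHasTy (Γ.map (UTy.shift 1 0)) t (.u U) →
      AHasTy Γ (.tlam t) (.u (.all U))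
  | tapp : ∀ {Γ t U V}, AHasTy Γ t (.u (.all U)) →
      AHasTy Γ (.tapp t V) (.u (UTy.subst 0 V U))
  | addI : ∀ {Γ t r T R}, AHasTy Γ t T → AHasTy Γ r R → AHasTy Γ (.add t r) (.add T R)
  | eq : ∀ {Γ t T R}, AHasTy Γ t T → TyEq T R → AHasTy Γ t R

/-- The abstraction function `σ : λCA → Additive`. -/
noncomputable def absTm : Tm → ATm
  | .var n => .var n
  | .lam U t => .lam U (absTm t)
  | .tlam t => .tlam (absTm t)
  | .app t r => .app (absTm t) (absTm r)
  | .tapp t U => .tapp (absTm t) U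
  | .zero => .zero
  | .smul a t => nA ⌊a⌋₊ (absTm t)
  | .add t r => .add (absTm t) (absTm r)

end LCA

/-! ## System F with pairs -/

namespace Fp

inductive FTm : Type
  | var : ℕ → FTm
  | lam : FTm → FTm
  | app : FTm → FTm → FTm
  | star : FTm
  | pair : FTm → FTm → FTm
  | p1 : FTm → FTm
  | p2 : FTm → FTm

/-- The relation `⊑_F` on terms of System F with pairs. -/
inductive FSub : FTm → FTm → Prop
  | star : ∀ t, FSub .star t
  | refl : ∀ t, FSub t t
  | dup : ∀ t, FSub t (.pair t t)
  | pair : ∀ {t t' r r'}, FSub t t' → FSub r r' → FSub (.pair t r) (.pair t' r')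
  | app : ∀ {t t' r r'}, FSub t t' → FSub r r' → FSub (.app t r) (.app t' r')
  | lam : ∀ {t t'}, FSub t t' → FSub (.lam t) (.lam t')
  | p1 : ∀ {t t'}, FSub t t' → FSub (.p1 t) (.p1 t')
  | p2 : ∀ {t t'}, FSub t t' → FSub (.p2 t) (.p2 t')
  | trans : ∀ {t r s}, FSub t r → FSub r s → FSub t s

end Fp

/-! The real content is (CR1) for the generators `α.t + β.r`, an instance of: a term whose
atoms (its maximal subterms not built from `+`, `·` and `0`) are all strongly normalising is
strongly normalising. Measure a term by the multiset of AC-classes of its atoms, compared by the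
multiset extension of "is an atom of a reduct of (an SN term)", which is well founded, and then by
a weight. A reduction inside an atom replaces that atom by smaller ones, while an algebraic rule
(groups E and F) only deletes atoms and lowers the weight. Reduction preserves closedness, so the
closed SN terms form a candidate, and it contains `A ⊕ B`, the least set containing the generators
and closed under (CR2) and (CR3). -/

namespace LCA

open Relation

instance ACEq.setoid : Setoid Tm := ⟨ACEq, ⟨.refl, .symm, .trans⟩⟩

theorem Red.of_step {t r : Tm} (h : Step t r) : Red t r :=
  ⟨t, r, .refl t, h, .refl r⟩

theorem Red.of_aceq_left {t t' r : Tm} (e : ACEq t t') (h : Red t' r) : Red t r :=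
  let ⟨x, y, e₁, st, e₂⟩ := h
  ⟨x, y, e.trans e₁, st, e₂⟩

theorem Red.congr {f : Tm → Tm} (hstep : ∀ {x y}, Step x y → Step (f x) (f y))
    (hac : ∀ {x y}, ACEq x y → ACEq (f x) (f y)) {t t' : Tm} (h : Red t t') :
    Red (f t) (f t') :=
  let ⟨x, y, e₁, st, e₂⟩ := h
  ⟨f x, f y, hac e₁, hstep st, hac e₂⟩

theorem SN.of_red {t r : Tm} (h : SN t) (hr : Red t r) : SN r := h.inv hr

theorem SN.of_redStar {t r : Tm} (h : SN t) (hr : RedStar t r) : SN r := by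
  induction hr with
  | refl => exact h
  | tail _ hr ih => exact ih.of_red hr

theorem SN.of_aceq {t r : Tm} (h : SN t) (e : ACEq t r) : SN r :=
  ⟨_, fun _ hs => h.of_red (hs.of_aceq_left e)⟩

theorem Tm.ClosedAt.shift {t : Tm} {k : ℕ} (h : t.ClosedAt k) (d c : ℕ) :
    (t.shift d c).ClosedAt (k + d) := by
  induction t generalizing k c with
  | var n => simp only [Tm.shift, Tm.ClosedAt] at *; split <;> omega
  | lam U t ih => simpa [Tm.shift, Tm.ClosedAt, Nat.add_right_comm k 1 d] using ih h (c + 1)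
  | _ => simp_all [Tm.shift, Tm.ClosedAt]

theorem Tm.ClosedAt.tshift {t : Tm} {k : ℕ} (h : t.ClosedAt k) (d c : ℕ) :
    (t.tshift d c).ClosedAt k := by
  induction t generalizing k c <;> simp_all [Tm.tshift, Tm.ClosedAt]

theorem Tm.ClosedAt.tsubst {t : Tm} {k : ℕ} (h : t.ClosedAt k) (j : ℕ) (V : UTy) :
    (t.tsubst j V).ClosedAt k := by
  induction t generalizing k j V <;> simp_all [Tm.tsubst, Tm.ClosedAt]

theorem Tm.ClosedAt.subst {t s : Tm} {j k : ℕ} (ht : t.ClosedAt (k + 1)) (hs : s.ClosedAt k)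
    (hj : j ≤ k) : (Tm.subst j s t).ClosedAt k := by
  induction t generalizing s j k with
  | var n => simp only [Tm.subst]; split_ifs <;> simp_all [Tm.ClosedAt] <;> omega
  | lam U t ih => exact ih ht (hs.shift 1 0) (by omega)
  | tlam t ih => exact ih ht (hs.tshift 1 0) hj
  | _ => simp_all [Tm.subst, Tm.ClosedAt]

theorem ACEq.closedAt_iff {t r : Tm} (e : ACEq t r) (k : ℕ) : t.ClosedAt k ↔ r.ClosedAt k := by
  induction e generalizing k <;> simp_all [Tm.ClosedAt] <;> tauto

theorem Step.closedAt {t r : Tm} (h : Step t r) {k : ℕ} (ht : t.ClosedAt k) : r.ClosedAt k := by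
  induction h generalizing k with
  | beta U t b hb => exact Tm.ClosedAt.subst (t := t) ht.1 ht.2 k.zero_le
  | tbeta t U => exact Tm.ClosedAt.tsubst (t := t) ht 0 U
  | _ => simp_all [Tm.ClosedAt]

theorem Red.closed {t r : Tm} (h : Red t r) (ht : t.Closed) : r.Closed :=
  let ⟨_, _, e₁, st, e₂⟩ := h
  (e₂.closedAt_iff 0).1 (st.closedAt ((e₁.closedAt_iff 0).1 ht))

theorem RedStar.closed {t r : Tm} (h : RedStar t r) (ht : t.Closed) : r.Closed := by
  induction h with
  | refl => exact ht
  | tail _ hr ih => exact hr.closed ih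

theorem isCand_SN0 : IsCand SN0 where
  cr1 := le_rfl
  cr2 _ ht _ hr := ⟨hr.closed ht.1, ht.2.of_redStar hr⟩
  cr3 _ hn h := ⟨hn.1, ⟨_, fun s hs => (h s hs).2⟩⟩

inductive Subterm : Tm → Tm → Prop
  | lam : ∀ U t, Subterm t (.lam U t)
  | tlam : ∀ t, Subterm t (.tlam t)
  | appL : ∀ t r, Subterm t (.app t r)
  | appR : ∀ t r, Subterm r (.app t r)
  | tapp : ∀ t U, Subterm t (.tapp t U)
  | smul : ∀ (a : ℝ≥0) t, Subterm t (.smul a t)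
  | addL : ∀ t r, Subterm t (.add t r)
  | addR : ∀ t r, Subterm r (.add t r)

theorem Subterm.exists_red {s t s' : Tm} (h : Subterm s t) (hs : Red s s') :
    ∃ t', Red t t' ∧ Subterm s' t' := by
  cases h with
  | lam U t => exact ⟨_, hs.congr (.lamC U) (.lamCong U), .lam U s'⟩
  | tlam t => exact ⟨_, hs.congr .tlamC .tlamCong, .tlam s'⟩
  | appL t r => exact ⟨_, hs.congr (.appL r) (.appCong · (.refl r)), .appL s' r⟩
  | appR t r => exact ⟨_, hs.congr (.appR t) (.appCong (.refl t) ·), .appR t s'⟩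
  | tapp t U => exact ⟨_, hs.congr (.tappC U) (.tappCong U), .tapp s' U⟩
  | smul a t => exact ⟨_, hs.congr (.smulC a) (.smulCong a), .smul a s'⟩
  | addL t r => exact ⟨_, hs.congr (.addL r) (.addCong · (.refl r)), .addL s' r⟩
  | addR t r =>
    have hred : Red (.add s t) (.add s' t) := hs.congr (.addL t) (.addCong · (.refl t))
    exact ⟨_, .of_aceq_left (.comm t s) hred, .addL s' t⟩

theorem exists_red_of_reflTransGen_subterm {s t s' : Tm} (h : ReflTransGen Subterm s t)
    (hs : Red s s') : ∃ t', Red t t' ∧ ReflTransGen Subterm s' t' := by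
  induction h using ReflTransGen.head_induction_on generalizing s' with
  | refl => exact ⟨s', hs, .refl⟩
  | head hsub _ ih =>
    obtain ⟨u', hu', hsub'⟩ := hsub.exists_red hs
    obtain ⟨t', ht', hsub''⟩ := ih hu'
    exact ⟨t', ht', .head hsub' hsub''⟩

theorem SN.of_reflTransGen_subterm {s t : Tm} (h : SN t) (hs : ReflTransGen Subterm s t) :
    SN s := by
  induction h generalizing s with
  | intro t _ ih =>
    refine ⟨s, fun s' hss' => ?_⟩
    obtain ⟨t', htt', hs'⟩ := exists_red_of_reflTransGen_subterm hs hss'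
    exact ih t' htt' hs'

def atoms : Tm → Multiset Tm
  | .add t r => atoms t + atoms r
  | .smul _ t => atoms t
  | .zero => 0
  | t => {t}

/-- Chosen so that every rewrite rule of groups E and F strictly decreases it. -/
def wgt : Tm → ℕ
  | .add t r => wgt t + wgt r + 2
  | .smul _ t => 2 * wgt t + 1
  | _ => 0

theorem reflTransGen_subterm_of_mem_atoms {a t : Tm} (h : a ∈ atoms t) :
    ReflTransGen Subterm a t := by
  induction t with
  | add t r iht ihr =>
    rcases Multiset.mem_add.1 h with h | h
    exacts [(iht h).tail (.addL t r), (ihr h).tail (.addR t r)]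
  | smul b t ih => exact (ih h).tail (.smul b t)
  | zero => simp [atoms] at h
  | _ => rw [Multiset.mem_singleton.1 h]

def AtomsSN (t : Tm) : Prop := ∀ a ∈ atoms t, SN a

theorem SN.atomsSN {t : Tm} (h : SN t) : AtomsSN t :=
  fun _ ha => h.of_reflTransGen_subterm (reflTransGen_subterm_of_mem_atoms ha)

abbrev TmModAC := Quotient ACEq.setoid

def atomsAC (t : Tm) : Multiset TmModAC := (atoms t).map (⟦·⟧)

theorem ACEq.atomsAC_eq {t r : Tm} (e : ACEq t r) : atomsAC t = atomsAC r := by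
  induction e with
  | refl => rfl
  | symm _ ih => exact ih.symm
  | trans _ _ ih₁ ih₂ => exact ih₁.trans ih₂
  | comm => simp only [atomsAC, atoms, Multiset.map_add, add_comm]
  | assoc => simp only [atomsAC, atoms, Multiset.map_add, add_assoc]
  | addCong _ _ ih₁ ih₂ => simp_all only [atomsAC, atoms, Multiset.map_add]
  | smulCong _ _ ih => exact ih
  | appCong e₁ e₂ => simpa [atomsAC, atoms] using Quotient.sound (ACEq.appCong e₁ e₂)
  | tappCong U e => simpa [atomsAC, atoms] using Quotient.sound (ACEq.tappCong U e)
  | lamCong U e => simpa [atomsAC, atoms] using Quotient.sound (ACEq.lamCong U e)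
  | tlamCong e => simpa [atomsAC, atoms] using Quotient.sound (ACEq.tlamCong e)

theorem ACEq.wgt_eq {t r : Tm} (e : ACEq t r) : wgt t = wgt r := by
  induction e <;> simp_all [wgt] <;> omega

theorem AtomsSN.of_aceq {t r : Tm} (h : AtomsSN t) (e : ACEq t r) : AtomsSN r := by
  intro a ha
  have hq : ⟦a⟧ ∈ atomsAC t := e.atomsAC_eq ▸ Multiset.mem_map_of_mem _ ha
  obtain ⟨b, hb, hba⟩ := Multiset.mem_map.1 hq
  exact (h b hb).of_aceq (Quotient.exact hba)

def AtomLt (q p : TmModAC) : Prop :=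
  ∃ a x, SN a ∧ Red a x ∧ p = ⟦a⟧ ∧ q ∈ atomsAC x

theorem acc_atomLt_of_reflTransGen_subterm {b t : Tm} (h : SN t)
    (hb : ReflTransGen Subterm b t) : Acc AtomLt ⟦b⟧ := by
  induction h generalizing b with
  | intro t _ ih =>
    refine ⟨_, fun q ⟨a, x, _, hax, hba, hq⟩ => ?_⟩
    obtain ⟨t', htt', hxt'⟩ :=
      exists_red_of_reflTransGen_subterm hb (hax.of_aceq_left (Quotient.exact hba))
    obtain ⟨c, hc, rfl⟩ := Multiset.mem_map.1 hq
    exact ih t' htt' ((reflTransGen_subterm_of_mem_atoms hc).trans hxt')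

theorem wellFounded_atomLt : WellFounded AtomLt :=
  ⟨Quotient.ind fun b => ⟨_, fun q hq => by
    obtain ⟨a, -, ha, -, hba, -⟩ := id hq
    have hb : SN b := ha.of_aceq (Quotient.exact hba.symm)
    exact (acc_atomLt_of_reflTransGen_subterm hb .refl).inv hq⟩⟩

def MeasureLt : Multiset TmModAC × ℕ → Multiset TmModAC × ℕ → Prop :=
  Prod.Lex (TransGen (CutExpand AtomLt)) (· < ·)

def measure (t : Tm) : Multiset TmModAC × ℕ := (atomsAC t, wgt t)

theorem wellFounded_measureLt : WellFounded MeasureLt :=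
  wellFounded_atomLt.cutExpand.transGen.prod_lex wellFounded_lt

theorem reflTransGen_cutExpand_add {α : Type*} {r : α → α → Prop} (s u : Multiset α) :
    ReflTransGen (CutExpand r) s (s + u) := by
  induction u using Multiset.induction with
  | empty => rw [add_zero]
  | cons a u ih =>
    refine ih.tail ⟨0, a, by simp, ?_⟩
    rw [Multiset.add_cons, add_zero, ← Multiset.singleton_add, add_comm]

theorem measureLt_of_le_of_lt {M M' : Multiset TmModAC} {n n' : ℕ} (hM : M' ≤ M)
    (hn : n' < n) : MeasureLt (M', n') (M, n) := by
  obtain ⟨u, rfl⟩ := exists_add_of_le hM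
  rcases reflTransGen_iff_eq_or_transGen.1 (reflTransGen_cutExpand_add (r := AtomLt) M' u)
    with h | h
  · rw [h]; exact .right _ hn
  · exact .left _ _ h

theorem MeasureLt.add_right {t t' : Tm} (h : MeasureLt (measure t') (measure t)) (r : Tm) :
    MeasureLt (measure (.add t' r)) (measure (.add t r)) := by
  simp only [MeasureLt, Prod.lex_iff, measure, atomsAC, atoms, Multiset.map_add, wgt] at h ⊢
  rcases h with h | ⟨he, h⟩
  · exact .inl (h.lift (· + _) fun _ _ h => (cutExpand_add_right _).2 h)
  · exact .inr ⟨by rw [he], by omega⟩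

theorem MeasureLt.smul {t t' : Tm} (h : MeasureLt (measure t') (measure t)) (a : ℝ≥0) :
    MeasureLt (measure (.smul a t')) (measure (.smul a t)) := by
  simp only [MeasureLt, Prod.lex_iff, measure, atomsAC, atoms, wgt] at h ⊢
  exact h.imp_right (And.imp_right (by omega))

theorem measureLt_of_red_atom {a x : Tm} (ha : SN a) (hat : atoms a = {a}) (h : Red a x) :
    MeasureLt (measure x) (measure a) :=
  .left _ _ (.single ⟨atomsAC x, ⟦a⟧, fun _ hq => ⟨a, x, ha, h, rfl, hq⟩,
    by simp [atomsAC, hat, add_comm]⟩)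

theorem ACEq.measure_eq {t r : Tm} (e : ACEq t r) : measure t = measure r := by
  rw [measure, measure, e.atomsAC_eq, e.wgt_eq]

theorem atomsSN_add {t r : Tm} : AtomsSN (.add t r) ↔ AtomsSN t ∧ AtomsSN r := by
  simp only [AtomsSN, atoms, Multiset.mem_add, or_imp, forall_and]

theorem atomsSN_and_measureLt_of_atoms_le {u u' : Tm} (hle : atoms u' ≤ atoms u)
    (hw : wgt u' < wgt u) (hu : AtomsSN u) :
    AtomsSN u' ∧ MeasureLt (measure u') (measure u) :=
  ⟨fun a ha => hu a (Multiset.mem_of_le hle ha),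
    measureLt_of_le_of_lt (Multiset.map_le_map hle) hw⟩

theorem atomsSN_and_measureLt_of_red_atom {u u' : Tm} (hat : atoms u = {u}) (h : Red u u')
    (hu : AtomsSN u) : AtomsSN u' ∧ MeasureLt (measure u') (measure u) :=
  have hsn : SN u := hu u (by simp [hat])
  ⟨(hsn.of_red h).atomsSN, measureLt_of_red_atom hsn hat h⟩

theorem Step.atomsSN_and_measureLt {u u' : Tm} (h : Step u u') (hu : AtomsSN u) :
    AtomsSN u' ∧ MeasureLt (measure u') (measure u) := by
  have hred := Red.of_step h
  induction h with
  | addL r hstep ih =>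
    obtain ⟨h₁, h₂⟩ := ih (atomsSN_add.1 hu).1 (.of_step hstep)
    exact ⟨atomsSN_add.2 ⟨h₁, (atomsSN_add.1 hu).2⟩, h₂.add_right r⟩
  | smulC a hstep ih =>
    obtain ⟨h₁, h₂⟩ := ih hu (.of_step hstep)
    exact ⟨h₁, h₂.smul a⟩
  | addZero | zeroSmul | oneSmul | smulZero | smulSmul | smulAdd | factor | factorOne
    | factorBare =>
    exact atomsSN_and_measureLt_of_atoms_le (by simp [atoms]) (by simp only [wgt]; omega) hu
  -- the remaining rules rewrite an application, type application or abstraction: an atom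
  | _ => exact atomsSN_and_measureLt_of_red_atom rfl hred hu

theorem Red.atomsSN_and_measureLt {u u' : Tm} (h : Red u u') (hu : AtomsSN u) :
    AtomsSN u' ∧ MeasureLt (measure u') (measure u) := by
  obtain ⟨x, y, e₁, st, e₂⟩ := h
  obtain ⟨hy, hlt⟩ := st.atomsSN_and_measureLt (hu.of_aceq e₁)
  exact ⟨hy.of_aceq e₂, e₁.measure_eq ▸ e₂.measure_eq ▸ hlt⟩

theorem AtomsSN.sn {t : Tm} (ht : AtomsSN t) : SN t := by
  induction t using (InvImage.wf measure wellFounded_measureLt).induction with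
  | _ t ih =>
    refine ⟨t, fun s hs => ?_⟩
    obtain ⟨hs', hlt⟩ := hs.atomsSN_and_measureLt ht
    exact ih s hlt hs'

theorem add_smul_mem_SN0 {t r : Tm} (ht : t ∈ SN0) (hr : r ∈ SN0) (a b : ℝ≥0) :
    Tm.add (.smul a t) (.smul b r) ∈ SN0 :=
  ⟨⟨ht.1, hr.1⟩, AtomsSN.sn (atomsSN_add.2 ⟨ht.2.atomsSN, hr.2.atomsSN⟩)⟩

theorem oplusCl_subset {A B C : Set Tm} (hC : IsCand C)
    (hbase : ∀ (a b : ℝ≥0) {t r}, t ∈ A → r ∈ B →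
      Tm.add (.smul a t) (.smul b r) ∈ C) :
    OplusCl A B ⊆ C := by
  intro t ht
  induction ht with
  | base a b ht hr => exact hbase a b ht hr
  | red _ h ih => exact hC.cr2 ih h
  | neu hn _ ih => exact hC.cr3 hn ih

end LCA

open LCA in
/-- `A ⊕ B` is a reducibility candidate. -/
theorem oplus_isCand {A B : Set Tm} (hA : IsCand A) (hB : IsCand B) :
    IsCand (OplusCl A B) := by
  refine ⟨oplusCl_subset isCand_SN0 ?_, fun _ ht _ h => .red ht h, fun _ hn h => .neu hn h⟩
  exact fun a b _ _ ht hr => add_smul_mem_SN0 (hA.cr1 ht) (hB.cr1 hr) a b
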